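/- arXiv:0909.2231 — 2 statements merged into one kernel-verified Lean document; each statement's English description precedes it below -/
import Mathlib

section
/- Let X be a σ-β-defavorable space, K a topological space, f : X × K → ℝ a separately continuous map, and φ : K → C_p(X) defined by φ(y)(x) = f(x,y). Suppose there is a sequence (𝒰ₙ)ₙ of countable covers of K which is countably pseudo-complete with respect to φ, i.e., for every choice Fₙ ∈ 𝒰ₙ (n ∈ ℕ) and every sequence (yₙ) ⊆ K with yₙ ∈ ⋂_{i≤n} Fᵢ for all n, the set {φ(yₙ) : n ∈ ℕ} is bounded in C_p(X). Then for every ε > 0 there is a residual subset R_ε of X such that for every (x,y) ∈ R_ε × K there exist a finite sequence of sets Fᵢ ∈ 𝒰ᵢ, i = 0,…,k, with y ∈ ⋂_{i≤k} Fᵢ, and a neighborhood O of (x,y) in X × K such that |f(x,y) − f(x',y')| < ε for every (x',y') ∈ O ∩ (X × ⋂_{i≤k} Fᵢ). -/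
open Set Topology Filter

namespace SepJoint

/-- The list `[f 0, …, f (n-1)]` of the first `n` values of a sequence. -/
def hist {A : Type*} (f : ℕ → A) (n : ℕ) : List A := List.ofFn (fun i : Fin n => f i)

variable (X : Type*) [TopologicalSpace X]

/-- A strategy for player β in games of type `𝒥` (with points): from the list of α's
previous moves `(Uᵢ, aᵢ)`, produce β's next open set `Vₙ`. -/
abbrev BetaStrategy := List (Set X × X) → Set X

/-- A strategy for player α in games of type `𝒥`: from the list `[V₀, …, Vₙ]` of β's moves
(the last being the one to respond to), produce α's move `(Uₙ, aₙ)`. -/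
abbrev AlphaStrategy := List (Set X) → Set X × X

/-- A strategy for player β in games of type `𝒥*`: from the list of α's previous
moves `Uᵢ`, produce β's next open set `Vₙ`. -/
abbrev BetaStrategyStar := List (Set X) → Set X

/-- A strategy for player α in games of type `𝒥*`. -/
abbrev AlphaStrategyStar := List (Set X) → Set X

variable {X}

/-! ### Games of type `𝒥` (α plays pairs `(Uₙ, aₙ)`) -/

/-- α has played legally against the β-strategy `σ` at all stages `< n`:
each `Uᵢ` is a nonempty open subset of β's move `Vᵢ = σ(history)`. -/
def AlphaLegal (σ : BetaStrategy X) (U : ℕ → Set X) (a : ℕ → X) (n : ℕ) : Prop :=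
  ∀ i < n, IsOpen (U i) ∧ (U i).Nonempty ∧ U i ⊆ σ (hist (fun j => (U j, a j)) i)

/-- `σ` is a legal strategy for β: against any legal finite history it produces a nonempty
open set contained in α's previous move. -/
def BetaLegal (σ : BetaStrategy X) : Prop :=
  ∀ (U : ℕ → Set X) (a : ℕ → X) (n : ℕ), AlphaLegal σ U a n →
    IsOpen (σ (hist (fun j => (U j, a j)) n)) ∧
    (σ (hist (fun j => (U j, a j)) n)).Nonempty ∧
    ∀ m, n = m + 1 → σ (hist (fun j => (U j, a j)) n) ⊆ U m

/-- The winning condition for α in the game `𝒥_Γ` on the play with moves `(Uₙ, aₙ)`: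
for each `g ∈ Γ` there is `t ∈ ⋂ₙ Uₙ` with `g t` in the closure of `{g (aₙ) : n}`. -/
def AlphaWinsGamma (Γ : Set (X → ℝ)) (U : ℕ → Set X) (a : ℕ → X) : Prop :=
  ∀ g ∈ Γ, ∃ t ∈ (⋂ n, U n), g t ∈ closure (Set.range fun n => g (a n))

/-- The winning condition for α in the game `𝒥` on the play with moves `(Uₙ, aₙ)`:
`(⋂ₙ Uₙ) ∩ closure {aₙ : n} ≠ ∅`. -/
def AlphaWinsPlain (U : ℕ → Set X) (a : ℕ → X) : Prop :=
  ((⋂ n, U n) ∩ closure (Set.range a)).Nonempty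

/-- `σ` is a winning strategy for β in the game `𝒥_Γ`. -/
def BetaWinningGamma (Γ : Set (X → ℝ)) (σ : BetaStrategy X) : Prop :=
  BetaLegal σ ∧ ∀ U a, (∀ n, AlphaLegal σ U a n) → ¬ AlphaWinsGamma Γ U a

/-- `σ` is a winning strategy for β in the game `𝒥`. -/
def BetaWinningPlain (σ : BetaStrategy X) : Prop :=
  BetaLegal σ ∧ ∀ U a, (∀ n, AlphaLegal σ U a n) → ¬ AlphaWinsPlain U a

/-- `X` is σ_Γ-β-defavorable: β has no winning strategy in the game `𝒥_Γ`. -/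
def SigmaGammaBetaDefavorable (X : Type*) [TopologicalSpace X] (Γ : Set (X → ℝ)) : Prop :=
  ¬ ∃ σ : BetaStrategy X, BetaWinningGamma Γ σ

/-- `X` is σ-β-defavorable: β has no winning strategy in the game `𝒥`. -/
def SigmaBetaDefavorable (X : Type*) [TopologicalSpace X] : Prop :=
  ¬ ∃ σ : BetaStrategy X, BetaWinningPlain σ

/-- Given the α-strategy `τ` and β's moves `V`, α's `n`-th move `(Uₙ, aₙ) = τ [V₀, …, Vₙ]`. -/
def alphaMove (τ : AlphaStrategy X) (V : ℕ → Set X) (n : ℕ) : Set X × X :=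
  τ (hist V (n + 1))

/-- `τ` is a legal strategy for α: along any legal history of β-moves it answers with a
nonempty open subset of β's last move. -/
def AlphaStratLegal (τ : AlphaStrategy X) : Prop :=
  ∀ (V : ℕ → Set X) (n : ℕ), (IsOpen (V 0) ∧ (V 0).Nonempty) →
    (∀ i < n, IsOpen (V (i + 1)) ∧ (V (i + 1)).Nonempty ∧ V (i + 1) ⊆ (alphaMove τ V i).1) →
    IsOpen (alphaMove τ V n).1 ∧ (alphaMove τ V n).1.Nonempty ∧ (alphaMove τ V n).1 ⊆ V n

/-- `V` is a full run of legal moves of β against the α-strategy `τ`. -/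
def BetaLegalRun (τ : AlphaStrategy X) (V : ℕ → Set X) : Prop :=
  IsOpen (V 0) ∧ (V 0).Nonempty ∧
    ∀ n, IsOpen (V (n + 1)) ∧ (V (n + 1)).Nonempty ∧ V (n + 1) ⊆ (alphaMove τ V n).1

/-- `τ` is a conditionally winning strategy for α in the game `𝒥_Γ`: every compatible play
with `⋂ₙ Uₙ ≠ ∅` fulfils the winning condition for α. -/
def CondAlphaWinningGamma (Γ : Set (X → ℝ)) (τ : AlphaStrategy X) : Prop :=
  AlphaStratLegal τ ∧
    ∀ V, BetaLegalRun τ V → (⋂ n, (alphaMove τ V n).1).Nonempty →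
      AlphaWinsGamma Γ (fun n => (alphaMove τ V n).1) (fun n => (alphaMove τ V n).2)

/-- `X` is conditionally σ_Γ-α-favorable. -/
def CondSigmaGammaAlphaFavorable (X : Type*) [TopologicalSpace X] (Γ : Set (X → ℝ)) : Prop :=
  ∃ τ : AlphaStrategy X, CondAlphaWinningGamma Γ τ

/-- `τ` is a conditionally winning strategy for α in the game `𝒥`. -/
def CondAlphaWinningPlain (τ : AlphaStrategy X) : Prop :=
  AlphaStratLegal τ ∧
    ∀ V, BetaLegalRun τ V → (⋂ n, (alphaMove τ V n).1).Nonempty →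
      AlphaWinsPlain (fun n => (alphaMove τ V n).1) (fun n => (alphaMove τ V n).2)

/-- `X` is conditionally σ-α-favorable. -/
def CondSigmaAlphaFavorable (X : Type*) [TopologicalSpace X] : Prop :=
  ∃ τ : AlphaStrategy X, CondAlphaWinningPlain τ

/-! ### Games of type `𝒥*` (α plays only open sets) -/

/-- α has played legally against the β-strategy `σ` in `𝒥*` at all stages `< n`. -/
def AlphaLegalStar (σ : BetaStrategyStar X) (U : ℕ → Set X) (n : ℕ) : Prop :=
  ∀ i < n, IsOpen (U i) ∧ (U i).Nonempty ∧ U i ⊆ σ (hist U i)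

/-- `σ` is a legal strategy for β in `𝒥*`. -/
def BetaLegalStar (σ : BetaStrategyStar X) : Prop :=
  ∀ (U : ℕ → Set X) (n : ℕ), AlphaLegalStar σ U n →
    IsOpen (σ (hist U n)) ∧ (σ (hist U n)).Nonempty ∧ ∀ m, n = m + 1 → σ (hist U n) ⊆ U m

/-- The winning condition for α in the game `𝒥*_Γ` on the play with α-moves `Uₙ`:
for every sequence `(aₙ)` with `aₙ ∈ Uₙ` and every `g ∈ Γ`, there is `t ∈ ⋂ₙ Uₙ` with
`g t` in the closure of `{g (aₙ) : n}`. -/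
def AlphaWinsStar (Γ : Set (X → ℝ)) (U : ℕ → Set X) : Prop :=
  ∀ a : ℕ → X, (∀ n, a n ∈ U n) → ∀ g ∈ Γ,
    ∃ t ∈ (⋂ n, U n), g t ∈ closure (Set.range fun n => g (a n))

/-- `σ` is a winning strategy for β in the game `𝒥*_Γ`. -/
def BetaWinningStar (Γ : Set (X → ℝ)) (σ : BetaStrategyStar X) : Prop :=
  BetaLegalStar σ ∧ ∀ U, (∀ n, AlphaLegalStar σ U n) → ¬ AlphaWinsStar Γ U

/-- `X` is σ*_Γ-β-defavorable: β has no winning strategy in `𝒥*_Γ`. -/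
def SigmaStarBetaDefavorable (X : Type*) [TopologicalSpace X] (Γ : Set (X → ℝ)) : Prop :=
  ¬ ∃ σ : BetaStrategyStar X, BetaWinningStar Γ σ

/-- Given the α-strategy `τ` and β's moves `V`, α's `n`-th move `Uₙ = τ [V₀, …, Vₙ]` in `𝒥*`. -/
def alphaMoveStar (τ : AlphaStrategyStar X) (V : ℕ → Set X) (n : ℕ) : Set X :=
  τ (hist V (n + 1))

/-- `τ` is a legal strategy for α in `𝒥*`. -/
def AlphaStratLegalStar (τ : AlphaStrategyStar X) : Prop :=
  ∀ (V : ℕ → Set X) (n : ℕ), (IsOpen (V 0) ∧ (V 0).Nonempty) →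
    (∀ i < n, IsOpen (V (i + 1)) ∧ (V (i + 1)).Nonempty ∧ V (i + 1) ⊆ alphaMoveStar τ V i) →
    IsOpen (alphaMoveStar τ V n) ∧ (alphaMoveStar τ V n).Nonempty ∧ alphaMoveStar τ V n ⊆ V n

/-- `V` is a full run of legal moves of β against the α-strategy `τ` in `𝒥*`. -/
def BetaLegalRunStar (τ : AlphaStrategyStar X) (V : ℕ → Set X) : Prop :=
  IsOpen (V 0) ∧ (V 0).Nonempty ∧
    ∀ n, IsOpen (V (n + 1)) ∧ (V (n + 1)).Nonempty ∧ V (n + 1) ⊆ alphaMoveStar τ V n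

/-- `τ` is a winning strategy for α in the game `𝒥*_Γ`. -/
def AlphaWinningStar (Γ : Set (X → ℝ)) (τ : AlphaStrategyStar X) : Prop :=
  AlphaStratLegalStar τ ∧
    ∀ V, BetaLegalRunStar τ V → AlphaWinsStar Γ (fun n => alphaMoveStar τ V n)

/-- `τ` is a conditionally winning strategy for α in the game `𝒥*_Γ`. -/
def CondAlphaWinningStar (Γ : Set (X → ℝ)) (τ : AlphaStrategyStar X) : Prop :=
  AlphaStratLegalStar τ ∧
    ∀ V, BetaLegalRunStar τ V → (⋂ n, alphaMoveStar τ V n).Nonempty →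
      AlphaWinsStar Γ (fun n => alphaMoveStar τ V n)

/-- `X` is σ*_Γ-α-favorable. -/
def SigmaStarAlphaFavorable (X : Type*) [TopologicalSpace X] (Γ : Set (X → ℝ)) : Prop :=
  ∃ τ : AlphaStrategyStar X, AlphaWinningStar Γ τ

/-- `X` is conditionally σ*_Γ-α-favorable. -/
def CondSigmaStarAlphaFavorable (X : Type*) [TopologicalSpace X] (Γ : Set (X → ℝ)) : Prop :=
  ∃ τ : AlphaStrategyStar X, CondAlphaWinningStar Γ τ

/-! ### Auxiliary notions -/

/-- `f : X × K → ℝ` is separately continuous. -/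
def SeparatelyContinuous {K : Type*} [TopologicalSpace K] (f : X × K → ℝ) : Prop :=
  (∀ x, Continuous fun y => f (x, y)) ∧ (∀ y, Continuous fun x => f (x, y))

/-- The map `φ : K → ℝ^X`, `φ(y)(x) = f(x, y)`. -/
def phi {X K : Type*} (f : X × K → ℝ) (y : K) : X → ℝ := fun x => f (x, y)

/-- A sequence `(Wₙ)` of subsets of `K` is countably pair complete with respect to `(φ, Γ)`:
for all sequences `yₙ, zₙ ∈ Wₙ`, the sequence `φ(yₙ) - φ(zₙ)` has a cluster point in `Γ`
(`ℝ^X` carrying the product, i.e. pointwise convergence, topology). -/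
def PairComplete {K : Type*} (f : X × K → ℝ) (Γ : Set (X → ℝ)) (W : ℕ → Set K) : Prop :=
  ∀ y z : ℕ → K, (∀ n, y n ∈ W n) → (∀ n, z n ∈ W n) →
    ∃ g ∈ Γ, MapClusterPt g atTop (fun n => phi f (y n) - phi f (z n))

/-- `f` is ε-continuous at `p`. -/
def EpsCont {K : Type*} [TopologicalSpace K] (f : X × K → ℝ) (ε : ℝ) (p : X × K) : Prop :=
  ∃ O ∈ 𝓝 p, ∀ q ∈ O, |f p - f q| < ε

/-- `Y` is a bounded subset of `Z`: every continuous real-valued function on `Z`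
is bounded on `Y`. -/
def BoundedIn {Z : Type*} [TopologicalSpace Z] (Y : Set Z) : Prop :=
  ∀ g : Z → ℝ, Continuous g → ∃ M, ∀ y ∈ Y, |g y| ≤ M

/-- `Y` is relatively countably compact in `Z`: every sequence in `Y` has a cluster
point in `Z`. -/
def RelCountablyCompact {Z : Type*} [TopologicalSpace Z] (Y : Set Z) : Prop :=
  ∀ u : ℕ → Z, (∀ n, u n ∈ Y) → ∃ z : Z, MapClusterPt z atTop u

/-- `K` is pseudocompact: Tychonoff and every continuous real-valued function is bounded. -/
def Pseudocompact (K : Type*) [TopologicalSpace K] : Prop :=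
  T35Space K ∧ BoundedIn (Set.univ : Set K)

/-- `Y` is Čech-complete: Tychonoff, and there is a sequence of open covers of `Y` which is
complete: any filter base of nonempty closed sets, containing for each `n` a set included
in a member of the `n`-th cover, has nonempty intersection. -/
def CechComplete (Y : Type*) [TopologicalSpace Y] : Prop :=
  T35Space Y ∧ ∃ 𝒰 : ℕ → Set (Set Y),
    (∀ n, ∀ U ∈ 𝒰 n, IsOpen U) ∧ (∀ n, ⋃₀ 𝒰 n = Set.univ) ∧
    ∀ ℱ : Set (Set Y),
      (∀ F ∈ ℱ, IsClosed F) → ℱ.Nonempty → (∀ F ∈ ℱ, F.Nonempty) →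
      (∀ F₁ ∈ ℱ, ∀ F₂ ∈ ℱ, ∃ F₃ ∈ ℱ, F₃ ⊆ F₁ ∩ F₂) →
      (∀ n, ∃ F ∈ ℱ, ∃ U ∈ 𝒰 n, F ⊆ U) →
      (⋂₀ ℱ).Nonempty

/-- `Y` is a p-space: Tychonoff, and there is a sequence `(𝒰ₙ)` of open covers of `Y` such
that each `x ∈ Y` has a sequence `Uₙ ∈ 𝒰ₙ` of members containing it whose intersection is
compact and for which `(⋂_{i ≤ n} Uᵢ)ₙ` is an outer base of `⋂ₙ Uₙ`. -/
def PSpace (Y : Type*) [TopologicalSpace Y] : Prop :=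
  T35Space Y ∧ ∃ 𝒰 : ℕ → Set (Set Y),
    (∀ n, ∀ U ∈ 𝒰 n, IsOpen U) ∧ (∀ n, ⋃₀ 𝒰 n = Set.univ) ∧
    ∀ x : Y, ∃ U : ℕ → Set Y, (∀ n, U n ∈ 𝒰 n) ∧ (∀ n, x ∈ U n) ∧
      IsCompact (⋂ n, U n) ∧
      ∀ W : Set Y, IsOpen W → (⋂ n, U n) ⊆ W → ∃ m, (⋂ i ≤ m, U i) ⊆ W

/-- `X` is a Namioka space: for every compact Hausdorff `K`, every separately continuous
`f : X × K → ℝ` is jointly continuous at each point of `R × K` for some dense `R ⊆ X`. -/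
def NamiokaSpace (X : Type*) [TopologicalSpace X] : Prop :=
  ∀ (K : Type*) [TopologicalSpace K], CompactSpace K → T2Space K →
    ∀ f : X × K → ℝ, SeparatelyContinuous f →
      ∃ R : Set X, Dense R ∧ ∀ x ∈ R, ∀ y : K, ContinuousAt f (x, y)

/-- `A` is C-embedded in `Y`: every continuous real-valued function on `A` extends
continuously to `Y`. -/
def CEmbedded {Y : Type*} [TopologicalSpace Y] (A : Set Y) : Prop :=
  ∀ g : A → ℝ, Continuous g → ∃ G : Y → ℝ, Continuous G ∧ ∀ a : A, G a = g a

/-- `A` is C*-embedded in `Y`: every bounded continuous real-valued function on `A`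
extends continuously to `Y`. -/
def CStarEmbedded {Y : Type*} [TopologicalSpace Y] (A : Set Y) : Prop :=
  ∀ g : A → ℝ, Continuous g → (∃ M, ∀ a, |g a| ≤ M) →
    ∃ G : Y → ℝ, Continuous G ∧ ∀ a : A, G a = g a

/-- The family `F ⊆ ℝ^X` is equicontinuous at `x`. -/
def EquicontAt (F : Set (X → ℝ)) (x : X) : Prop :=
  ∀ ε > 0, ∃ U ∈ 𝓝 x, ∀ y ∈ U, ∀ g ∈ F, |g x - g y| < ε

end SepJoint

/-!
Let `B` be the set of `x` for which some `y` violates the conclusion; if `B` is meagre,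
`R = Bᶜ` works. Otherwise β wins `𝒥`. Along the play β fixes a cylinder
`⋂ i ≤ n, 𝒰 i (c i)` and an open set `Vₙ` in every nonempty open subset of which the points
of `B` with a bad partner in the cylinder are non-meagre (Banach's category theorem). Inside
α's move he picks such a bad pair `(x₀, y₀)`; the failure of `ε`-continuity there yields `z`
in the cylinder and a smaller open `Vₙ₊₁` on which `f (·, y₀)` and `f (·, z)` differ by more
than `ε / 2`, while they differ by less than `ε / 4` at α's points so far. If α won with
`t ∈ ⋂ Uₙ ∩ closure {aₙ}`, the two sequences of sections are bounded in `C_p(X)`; restricted to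
the countable set `{t} ∪ {aₙ}`, where `C_p` is metrizable, they have subsequences converging to
continuous limits whose difference is `≥ ε / 2` at `t` but `≤ ε / 4` on `{aₙ}`.
-/

namespace SepJoint

section Meagre

variable {X : Type*} [TopologicalSpace X]

def EverywhereNonMeagreOn (A V : Set X) : Prop :=
  ∀ W, IsOpen W → W.Nonempty → W ⊆ V → ¬ IsMeagre (A ∩ W)

theorem EverywhereNonMeagreOn.mono {A V V' : Set X} (h : EverywhereNonMeagreOn A V)
    (hV : V' ⊆ V) : EverywhereNonMeagreOn A V' :=
  fun W hW hne hWV' => h W hW hne (hWV'.trans hV)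

theorem exists_seq_isOpen_dense_of_isMeagre {s : Set X} (hs : IsMeagre s) :
    ∃ G : ℕ → Set X, (∀ n, IsOpen (G n)) ∧ (∀ n, Dense (G n)) ∧ s ∩ ⋂ n, G n = ∅ := by
  obtain ⟨S, hSo, hSd, hSc, hS⟩ := mem_residual_iff.1 hs
  rcases S.eq_empty_or_nonempty with rfl | hne
  · refine ⟨fun _ => univ, fun _ => isOpen_univ, fun _ => dense_univ, ?_⟩
    simpa [subset_compl_iff_disjoint_left, disjoint_iff_inter_eq_empty] using hS
  · obtain ⟨G, rfl⟩ := hSc.exists_eq_range hne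
    refine ⟨G, fun n => hSo _ ⟨n, rfl⟩, fun n => hSd _ ⟨n, rfl⟩, ?_⟩
    rw [sInter_range] at hS
    exact disjoint_iff_inter_eq_empty.1 (subset_compl_iff_disjoint_left.1 hS)

theorem isMeagre_inter_closure_sUnion {A : Set X} {𝒟 : Set (Set X)}
    (hopen : ∀ U ∈ 𝒟, IsOpen U) (hdisj : 𝒟.PairwiseDisjoint id)
    (hmeagre : ∀ U ∈ 𝒟, IsMeagre (A ∩ U)) : IsMeagre (A ∩ closure (⋃₀ 𝒟)) := by
  choose! G hGo hGd hG using fun U hU => exists_seq_isOpen_dense_of_isMeagre (hmeagre U hU)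
  set T : ℕ → Set X := fun n => ⋃ U ∈ 𝒟, U ∩ G U n
  have hTo : ∀ n, IsOpen (T n) := fun n =>
    isOpen_biUnion fun U hU => (hopen U hU).inter (hGo U hU n)
  have hT : ∀ n, closure (⋃₀ 𝒟) ⊆ closure (T n) := fun n =>
    closure_minimal (sUnion_subset fun U hU => ((hGd U hU n).open_subset_closure_inter
      (hopen U hU)).trans (closure_mono (subset_biUnion_of_mem (u := fun U => U ∩ G U n) hU)))
      isClosed_closure
  -- a point of `closure (⋃₀ 𝒟)` off the nowhere dense frontier of the open set `T n` is in `T n`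
  have hres : ∀ n, (frontier (T n))ᶜ ∈ residual X := fun n =>
    residual_of_dense_open isClosed_frontier.isOpen_compl <| by
      rw [dense_iff_closure_eq, closure_compl, ← frontier_compl,
        interior_frontier (hTo n).isClosed_compl, compl_empty]
  refine mem_of_superset (countable_iInter_mem.2 hres) fun x hx hxA => ?_
  have hxT : ∀ n, x ∈ T n := fun n => by
    by_contra hxn
    exact mem_iInter.1 hx n ⟨hT n hxA.2, by rwa [(hTo n).interior_eq]⟩
  obtain ⟨U, hU, hxU, -⟩ := mem_iUnion₂.1 (hxT 0)
  refine (hG U hU).subset ⟨⟨hxA.1, hxU⟩, mem_iInter.2 fun n => ?_⟩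
  obtain ⟨U', hU', hxU', hxG⟩ := mem_iUnion₂.1 (hxT n)
  rwa [hdisj.elim hU' hU (not_disjoint_iff.2 ⟨x, hxU', hxU⟩)] at hxG

theorem exists_isMeagre_inter_closure_and_not_isMeagre_inter (A : Set X) :
    ∃ O, IsMeagre (A ∩ closure O) ∧
      ∀ W, IsOpen W → W.Nonempty → Disjoint W O → ¬ IsMeagre (A ∩ W) := by
  obtain ⟨𝒟, hmax⟩ := zorn_subset
    {𝒟 : Set (Set X) | (∀ U ∈ 𝒟, IsOpen U ∧ IsMeagre (A ∩ U)) ∧ 𝒟.PairwiseDisjoint id}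
    fun c hc hchain => ⟨⋃₀ c,
      ⟨fun U ⟨𝒟, h𝒟c, hU⟩ => (hc h𝒟c).1 U hU,
        (hchain.pairwiseDisjoint_sUnion id).2 fun 𝒟 h𝒟c => (hc h𝒟c).2⟩,
      fun _ => subset_sUnion_of_mem⟩
  obtain ⟨h𝒟, h𝒟disj⟩ := hmax.prop
  refine ⟨⋃₀ 𝒟, isMeagre_inter_closure_sUnion (fun U hU => (h𝒟 U hU).1) h𝒟disj
    (fun U hU => (h𝒟 U hU).2), fun W hW ⟨x, hxW⟩ hWO hAW => ?_⟩
  have hdisjW : ∀ U ∈ 𝒟, Disjoint W U := fun U hU => hWO.mono_right (subset_sUnion_of_mem hU)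
  have hW𝒟 : W ∈ 𝒟 := hmax.mem_of_prop_insert
    ⟨forall_mem_insert.2 ⟨⟨hW, hAW⟩, h𝒟⟩, h𝒟disj.insert fun U hU _ => hdisjW U hU⟩
  exact hWO.ne_of_mem hxW (subset_sUnion_of_mem hW𝒟 hxW) rfl

theorem exists_subset_everywhereNonMeagreOn {A U : Set X} (hU : IsOpen U)
    (hA : ¬ IsMeagre (A ∩ U)) :
    ∃ V, IsOpen V ∧ V.Nonempty ∧ V ⊆ U ∧ EverywhereNonMeagreOn A V := by
  obtain ⟨O, hO, hmax⟩ := exists_isMeagre_inter_closure_and_not_isMeagre_inter A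
  refine ⟨U \ closure O, hU.sdiff isClosed_closure, ?_, sdiff_subset,
    fun W hW hne hWV => hmax W hW hne (disjoint_left.2 fun x hx hxO =>
      (hWV hx).2 (subset_closure hxO))⟩
  by_contra hempty
  exact hA (hO.mono (inter_subset_inter_right A
    (sdiff_eq_empty.1 (not_nonempty_iff_eq_empty.1 hempty))))

end Meagre

section Bounded

variable {X : Type*} [TopologicalSpace X]

theorem BoundedIn.mono {Z : Type*} [TopologicalSpace Z] {Y Y' : Set Z} (h : BoundedIn Y)
    (hY : Y' ⊆ Y) : BoundedIn Y' :=
  fun g hg => (h g hg).imp fun _ hM y hy => hM y (hY hy)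

theorem BoundedIn.image {Z Z' : Type*} [TopologicalSpace Z] [TopologicalSpace Z'] {Y : Set Z}
    (h : BoundedIn Y) {φ : Z → Z'} (hφ : Continuous φ) : BoundedIn (φ '' Y) := by
  rintro g hg
  obtain ⟨M, hM⟩ := h (g ∘ φ) (hg.comp hφ)
  exact ⟨M, forall_mem_image.2 hM⟩

/-- Without a cluster point, `range u` is closed and discrete, so by Tietze the function
`u n ↦ max {m | u m = u n}` extends to a continuous function unbounded on `range u`. -/
theorem BoundedIn.exists_mapClusterPt {M : Type*} [TopologicalSpace M]
    [TopologicalSpace.MetrizableSpace M] {u : ℕ → M} (hu : BoundedIn (range u)) :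
    ∃ z, MapClusterPt z atTop u := by
  by_contra! h
  have hfin : ∀ x, ∃ s ∈ 𝓝 x, {n | u n ∈ s}.Finite := fun x => by
    simpa [mapClusterPt_iff_frequently, Nat.frequently_atTop_iff_infinite] using h x
  have hT : IsClosed (range u) ∧ IsDiscrete (range u) := by
    refine isClosed_and_discrete_iff.2 fun x => disjoint_principal_right.2 ?_
    obtain ⟨s, hs, hsfin⟩ := hfin x
    have hloc : (u '' {n | u n ∈ s})ᶜ ∈ 𝓝[≠] x :=
      isClosed_and_discrete_iff.1 ⟨(hsfin.image u).isClosed, (hsfin.image u).isDiscrete⟩ x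
        |> disjoint_principal_right.1
    filter_upwards [hloc, nhdsWithin_le_nhds hs] with y hy hys
    rintro ⟨n, rfl⟩
    exact hy ⟨n, hys, rfl⟩
  have hbdd : ∀ n, BddAbove {m | u m = u n} := fun n => by
    obtain ⟨s, hs, hsfin⟩ := hfin (u n)
    exact hsfin.bddAbove.mono fun m (hm : u m = u n) =>
      show u m ∈ s by rw [hm]; exact mem_of_mem_nhds hs
  have : DiscreteTopology (range u) := hT.2.to_subtype
  obtain ⟨G, hG⟩ := ContinuousMap.exists_restrict_eq hT.1
    ⟨fun q : range u => ((sSup {m | u m = q} : ℕ) : ℝ), continuous_of_discreteTopology⟩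
  obtain ⟨C, hC⟩ := hu G G.continuous
  obtain ⟨n, hn⟩ := exists_nat_gt C
  have hGn : G (u n) = ((sSup {m | u m = u n} : ℕ) : ℝ) :=
    DFunLike.congr_fun hG ⟨u n, mem_range_self n⟩
  have hle : (n : ℝ) ≤ G (u n) := hGn ▸ Nat.cast_le.2 (le_csSup (hbdd n) rfl)
  linarith [hC (u n) (mem_range_self n), le_abs_self (G (u n))]

theorem BoundedIn.exists_subseq_tendsto_on_countable {u : ℕ → {g : X → ℝ // Continuous g}}
    (hu : BoundedIn (range u)) {S : Set X} (hS : S.Countable) :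
    ∃ ψ : ℕ → ℕ, StrictMono ψ ∧ ∃ G : S → ℝ, Continuous G ∧
      ∀ s : S, Tendsto (fun n => (u (ψ n)).1 s) atTop (𝓝 (G s)) := by
  have : Countable S := hS.to_subtype
  have : TopologicalSpace.MetrizableSpace {g : S → ℝ // Continuous g} :=
    Topology.IsEmbedding.subtypeVal.metrizableSpace
  let restrict : {g : X → ℝ // Continuous g} → {g : S → ℝ // Continuous g} :=
    fun g => ⟨fun s => g.1 s, g.2.comp continuous_subtype_val⟩
  have hrestrict : Continuous restrict := by
    refine Continuous.subtype_mk (continuous_pi fun s => ?_) _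
    exact (continuous_apply (s : X)).comp continuous_subtype_val
  obtain ⟨G, hG⟩ := (range_comp restrict u ▸ hu.image hrestrict).exists_mapClusterPt
  obtain ⟨ψ, hψ, hlim⟩ := hG.tendsto_subseq
  exact ⟨ψ, hψ, G.1, G.2, fun s =>
    (((continuous_apply s).comp continuous_subtype_val).tendsto G).comp hlim⟩

/-- Along a subsequence both sequences converge pointwise on `{t} ∪ range a` to continuous
limits, whose difference is at least `δ` at `t` and at most `η` on `range a`. -/
theorem le_of_boundedIn_of_mem_closure {u v : ℕ → {g : X → ℝ // Continuous g}}
    (hu : BoundedIn (range u)) (hv : BoundedIn (range v)) {a : ℕ → X} {t : X}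
    (ht : t ∈ closure (range a)) {δ η : ℝ}
    (hgap : ∀ n, δ ≤ |(u n).1 t - (v n).1 t|)
    (hclose : ∀ i, ∀ᶠ n in atTop, |(u n).1 (a i) - (v n).1 (a i)| ≤ η) : δ ≤ η := by
  set S := insert t (range a)
  have hS : S.Countable := (countable_range a).insert t
  obtain ⟨ψ₁, hψ₁, G, hG, hGlim⟩ := hu.exists_subseq_tendsto_on_countable hS
  obtain ⟨ψ₂, hψ₂, H, hH, hHlim⟩ :=
    (hv.mono (range_comp_subset_range ψ₁ v)).exists_subseq_tendsto_on_countable hS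
  have hlim : ∀ s : S, Tendsto (fun n => |(u (ψ₁ (ψ₂ n))).1 s - (v (ψ₁ (ψ₂ n))).1 s|) atTop
      (𝓝 |G s - H s|) := fun s => (((hGlim s).comp hψ₂.tendsto_atTop).sub (hHlim s)).abs
  let tS : S := ⟨t, mem_insert t _⟩
  let aS : ℕ → S := fun i => ⟨a i, mem_insert_of_mem t (mem_range_self i)⟩
  have hle : ∀ i, |G (aS i) - H (aS i)| ≤ η := fun i =>
    le_of_tendsto (hlim (aS i)) ((hψ₁.comp hψ₂).tendsto_atTop.eventually (hclose i))
  have htS : tS ∈ closure (range aS) := by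
    rwa [closure_subtype, ← range_comp]
  calc δ ≤ |G tS - H tS| := ge_of_tendsto' (hlim tS) fun n => hgap _
    _ ≤ η := closure_minimal (forall_mem_range.2 hle)
        (isClosed_le ((hG.sub hH).abs) continuous_const) htS

end Bounded

section Game

variable {X K : Type*} [TopologicalSpace X] [TopologicalSpace K]

open Metric in
theorem exists_isOpen_gap_of_oscillation {f : X × K → ℝ} (hf : SeparatelyContinuous f)
    {ε : ℝ} (hε : 0 < ε) {F : Set K} {V₀ : Set X} (hV₀ : IsOpen V₀) {x₀ : X} (hx₀ : x₀ ∈ V₀)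
    {y₀ : K} (hosc : ∀ O ∈ 𝓝 (x₀, y₀), ∃ p ∈ O, p.2 ∈ F ∧ ε ≤ |f (x₀, y₀) - f p|)
    {P : Set X} (hP : P.Finite) :
    ∃ z ∈ F, ∃ V, IsOpen V ∧ V.Nonempty ∧ V ⊆ V₀ ∧
      (∀ v ∈ V, ε / 2 < |f (v, y₀) - f (v, z)|) ∧ ∀ p ∈ P, |f (p, y₀) - f (p, z)| < ε / 4 := by
  have hε4 : 0 < ε / 4 := by positivity
  set Ox := V₀ ∩ (fun v => f (v, y₀)) ⁻¹' ball (f (x₀, y₀)) (ε / 4)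
  set Oy := ⋂ p ∈ P, (fun w => f (p, w)) ⁻¹' ball (f (p, y₀)) (ε / 4)
  have hOx : IsOpen Ox := hV₀.inter (isOpen_ball.preimage (hf.2 y₀))
  have hOy : IsOpen Oy := hP.isOpen_biInter fun p _ => isOpen_ball.preimage (hf.1 p)
  have hmem : (x₀, y₀) ∈ Ox ×ˢ Oy :=
    ⟨⟨hx₀, mem_ball_self hε4⟩, mem_iInter₂.2 fun p _ => mem_ball_self hε4⟩
  obtain ⟨⟨x₁, z⟩, ⟨hx₁, hz⟩, hzF, hjump⟩ := hosc _ ((hOx.prod hOy).mem_nhds hmem)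
  refine ⟨z, hzF, Ox ∩ (fun v => f (v, z)) ⁻¹' ball (f (x₁, z)) (ε / 4),
    hOx.inter (isOpen_ball.preimage (hf.2 z)), ⟨x₁, hx₁, mem_ball_self hε4⟩,
    inter_subset_left.trans inter_subset_left, fun v ⟨⟨_, hvy⟩, hvz⟩ => ?_, fun p hp => ?_⟩
  · simp only [mem_preimage, mem_ball, Real.dist_eq] at hvy hvz
    have h₁ := abs_sub_le (f (x₀, y₀)) (f (v, y₀)) (f (x₁, z))
    have h₂ := abs_sub_le (f (v, y₀)) (f (v, z)) (f (x₁, z))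
    rw [abs_sub_comm] at hvy
    linarith
  · have := mem_iInter₂.1 hz p hp
    simp only [mem_preimage, mem_ball, Real.dist_eq] at this
    rwa [abs_sub_comm]

/-- The conclusion of the theorem fails at `(x, y)`. -/
def IsBadPoint (f : X × K → ℝ) (𝒰 : ℕ → ℕ → Set K) (ε : ℝ) (x : X) (y : K) : Prop :=
  ∀ (k : ℕ) (c : ℕ → ℕ), y ∈ ⋂ i ≤ k, 𝒰 i (c i) →
    ∀ O ∈ 𝓝 (x, y), ∃ p ∈ O, p.2 ∈ ⋂ i ≤ k, 𝒰 i (c i) ∧ ε ≤ |f (x, y) - f p|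

def badSet (f : X × K → ℝ) (𝒰 : ℕ → ℕ → Set K) (ε : ℝ) (c : ℕ → ℕ) (n : ℕ) : Set X :=
  {x | ∃ y, (∀ i < n, y ∈ 𝒰 i (c i)) ∧ IsBadPoint f 𝒰 ε x y}

theorem badSet_subset_iUnion {𝒰 : ℕ → ℕ → Set K} (hcover : ∀ n, ⋃ k, 𝒰 n k = univ)
    (f : X × K → ℝ) (ε : ℝ) (c : ℕ → ℕ) (n : ℕ) :
    badSet f 𝒰 ε c n ⊆ ⋃ d, badSet f 𝒰 ε (Function.update c n d) (n + 1) := by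
  rintro x ⟨y, hy, hbad⟩
  obtain ⟨d, hd⟩ := mem_iUnion.1 (hcover n ▸ mem_univ y)
  refine mem_iUnion.2 ⟨d, y, fun i hi => ?_, hbad⟩
  rcases (Nat.lt_succ_iff_lt_or_eq.1 hi) with hi | rfl
  · rw [Function.update_of_ne hi.ne]
    exact hy i hi
  · rwa [Function.update_self]

/-- `st = (V, c')` is a legal answer of β at stage `n` to α's move `U`: `c'` extends the
cylinder indices `c` by `c' n`, and `y, z` are points of the new cylinder keeping `f` apart on
`V` and close on α's points `P`. -/
structure IsStep (f : X × K → ℝ) (𝒰 : ℕ → ℕ → Set K) (ε : ℝ) (c : ℕ → ℕ) (n : ℕ)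
    (U P : Set X) (st : Set X × (ℕ → ℕ)) : Prop where
  eq_of_lt : ∀ i < n, st.2 i = c i
  isOpen : IsOpen st.1
  nonempty : st.1.Nonempty
  subset : st.1 ⊆ U
  everywhereNonMeagreOn : EverywhereNonMeagreOn (badSet f 𝒰 ε st.2 (n + 1)) st.1
  exists_gap : ∃ y z : K, (∀ i ≤ n, y ∈ 𝒰 i (st.2 i) ∧ z ∈ 𝒰 i (st.2 i)) ∧
    (∀ v ∈ st.1, ε / 2 < |f (v, y) - f (v, z)|) ∧ ∀ p ∈ P, |f (p, y) - f (p, z)| < ε / 4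

theorem exists_isStep {f : X × K → ℝ} (hf : SeparatelyContinuous f) {𝒰 : ℕ → ℕ → Set K}
    (hcover : ∀ n, ⋃ k, 𝒰 n k = univ) {ε : ℝ} (hε : 0 < ε) {c : ℕ → ℕ} {n : ℕ}
    {U : Set X} (hU : IsOpen U) (hB : ¬ IsMeagre (badSet f 𝒰 ε c n ∩ U)) {P : Set X}
    (hP : P.Finite) : ∃ st, IsStep f 𝒰 ε c n U P st := by
  obtain ⟨d, hd⟩ : ∃ d, ¬ IsMeagre (badSet f 𝒰 ε (Function.update c n d) (n + 1) ∩ U) := by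
    by_contra! h
    refine hB ((isMeagre_iUnion h).mono ?_)
    rw [← iUnion_inter]
    exact inter_subset_inter_left U (badSet_subset_iUnion hcover f ε c n)
  set c' := Function.update c n d
  obtain ⟨V₀, hV₀, hV₀ne, hV₀U, hV₀B⟩ := exists_subset_everywhereNonMeagreOn hU hd
  obtain ⟨x₀, ⟨y₀, hy₀, hbad⟩, hx₀⟩ := nonempty_of_not_isMeagre (hV₀B V₀ hV₀ hV₀ne le_rfl)
  have hy₀' : y₀ ∈ ⋂ i ≤ n, 𝒰 i (c' i) :=
    mem_iInter₂.2 fun i hi => hy₀ i (Nat.lt_succ_of_le hi)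
  obtain ⟨z, hz, V, hV, hVne, hVV₀, hgap, hclose⟩ :=
    exists_isOpen_gap_of_oscillation hf hε hV₀ hx₀ (hbad n c' hy₀') hP
  exact ⟨(V, c'), fun i hi => Function.update_of_ne hi.ne _ _, hV, hVne, hVV₀.trans hV₀U,
    hV₀B.mono hVV₀, y₀, z, fun i hi => ⟨mem_iInter₂.1 hy₀' i hi, mem_iInter₂.1 hz i hi⟩,
    hgap, hclose⟩

end Game

theorem hist_succ {A : Type*} (g : ℕ → A) (n : ℕ) : hist g (n + 1) = hist g n ++ [g n] := by
  rw [hist, List.ofFn_succ', List.concat_eq_append]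
  rfl

theorem mem_hist {A : Type*} {g : ℕ → A} {n : ℕ} {x : A} : x ∈ hist g n ↔ ∃ i < n, g i = x := by
  simp [hist, List.mem_ofFn, Fin.exists_iff]

section Strategy

variable {X K : Type*} [TopologicalSpace X] [TopologicalSpace K]
  (f : X × K → ℝ) (𝒰 : ℕ → ℕ → Set K) (ε : ℝ)

noncomputable def nextState (c : ℕ → ℕ) (n : ℕ) (U P : Set X) : Set X × (ℕ → ℕ) :=
  Classical.epsilon (IsStep f 𝒰 ε c n U P)

/-- β's state after the reversed history `l` of α's moves. -/
noncomputable def strategyState : List (Set X × X) → Set X × (ℕ → ℕ)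
  | [] => nextState f 𝒰 ε 0 0 univ ∅
  | m :: l => nextState f 𝒰 ε (strategyState l).2 (l.length + 1) m.1 {q.2 | q ∈ m :: l}

noncomputable def strategy : BetaStrategy X := fun l => (strategyState f 𝒰 ε l.reverse).1

noncomputable def playState (U : ℕ → Set X) (a : ℕ → X) : ℕ → Set X × (ℕ → ℕ)
  | 0 => nextState f 𝒰 ε 0 0 univ ∅
  | n + 1 => nextState f 𝒰 ε (playState U a n).2 (n + 1) (U n) (a '' Iic n)

theorem strategyState_hist (U : ℕ → Set X) (a : ℕ → X) (n : ℕ) :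
    strategyState f 𝒰 ε (hist (fun j => (U j, a j)) n).reverse = playState f 𝒰 ε U a n := by
  induction n with
  | zero => rfl
  | succ n ih =>
    have hpts : {q.2 | q ∈ (U n, a n) :: (hist (fun j => (U j, a j)) n).reverse} =
        a '' Iic n := by
      ext p
      simp only [List.mem_cons, List.mem_reverse, mem_hist]
      constructor
      · rintro ⟨q, rfl | ⟨i, hi, rfl⟩, rfl⟩
        exacts [⟨n, mem_Iic.2 le_rfl, rfl⟩, ⟨i, mem_Iic.2 hi.le, rfl⟩]
      · rintro ⟨i, hi : i ≤ n, rfl⟩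
        rcases hi.lt_or_eq with hi | rfl
        exacts [⟨(U i, a i), Or.inr ⟨i, hi, rfl⟩, rfl⟩, ⟨_, Or.inl rfl, rfl⟩]
    rw [hist_succ, List.reverse_append, List.reverse_singleton, List.singleton_append,
      strategyState, ih, hpts, List.length_reverse, hist, List.length_ofFn]
    rfl

end Strategy

section Play

variable {X K : Type*} [TopologicalSpace X] [TopologicalSpace K] {f : X × K → ℝ}
  {𝒰 : ℕ → ℕ → Set K} {ε : ℝ}

theorem isStep_nextState (hf : SeparatelyContinuous f) (hcover : ∀ n, ⋃ k, 𝒰 n k = univ)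
    (hε : 0 < ε) {c : ℕ → ℕ} {n : ℕ} {U P : Set X} (hU : IsOpen U)
    (hB : ¬ IsMeagre (badSet f 𝒰 ε c n ∩ U)) (hP : P.Finite) :
    IsStep f 𝒰 ε c n U P (nextState f 𝒰 ε c n U P) :=
  Classical.epsilon_spec (exists_isStep hf hcover hε hU hB hP)

theorem isStep_playState_zero (hf : SeparatelyContinuous f)
    (hcover : ∀ n, ⋃ k, 𝒰 n k = univ) (hε : 0 < ε) (hB : ¬ IsMeagre (badSet f 𝒰 ε 0 0))
    (U : ℕ → Set X) (a : ℕ → X) : IsStep f 𝒰 ε 0 0 univ ∅ (playState f 𝒰 ε U a 0) :=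
  isStep_nextState hf hcover hε isOpen_univ (by rwa [inter_univ]) finite_empty

theorem isStep_playState_succ (hf : SeparatelyContinuous f)
    (hcover : ∀ n, ⋃ k, 𝒰 n k = univ) (hε : 0 < ε) (hB : ¬ IsMeagre (badSet f 𝒰 ε 0 0))
    {U : ℕ → Set X} {a : ℕ → X} : ∀ n,
    (∀ i ≤ n, IsOpen (U i) ∧ (U i).Nonempty ∧ U i ⊆ (playState f 𝒰 ε U a i).1) →
    IsStep f 𝒰 ε (playState f 𝒰 ε U a n).2 (n + 1) (U n) (a '' Iic n)
      (playState f 𝒰 ε U a (n + 1))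
  | n, hU => by
    have hprev : EverywhereNonMeagreOn (badSet f 𝒰 ε (playState f 𝒰 ε U a n).2 (n + 1))
        (playState f 𝒰 ε U a n).1 := by
      cases n with
      | zero => exact (isStep_playState_zero hf hcover hε hB U a).everywhereNonMeagreOn
      | succ m => exact (isStep_playState_succ hf hcover hε hB m
          fun i hi => hU i (by omega)).everywhereNonMeagreOn
    obtain ⟨hUo, hUne, hUsub⟩ := hU n le_rfl
    exact isStep_nextState hf hcover hε hUo (hprev _ hUo hUne hUsub) ((finite_Iic n).image a)

theorem strategy_hist (U : ℕ → Set X) (a : ℕ → X) (n : ℕ) :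
    strategy f 𝒰 ε (hist (fun j => (U j, a j)) n) = (playState f 𝒰 ε U a n).1 :=
  congrArg Prod.fst (strategyState_hist f 𝒰 ε U a n)

theorem betaLegal_strategy (hf : SeparatelyContinuous f)
    (hcover : ∀ n, ⋃ k, 𝒰 n k = univ) (hε : 0 < ε) (hB : ¬ IsMeagre (badSet f 𝒰 ε 0 0)) :
    BetaLegal (strategy f 𝒰 ε) := by
  intro U a n hA
  simp only [AlphaLegal, strategy_hist] at hA
  rw [strategy_hist]
  cases n with
  | zero =>
    have h := isStep_playState_zero hf hcover hε hB U a
    exact ⟨h.isOpen, h.nonempty, fun m hm => absurd hm (Nat.zero_ne_add_one m)⟩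
  | succ n =>
    have h := isStep_playState_succ hf hcover hε hB n fun i hi => hA i (Nat.lt_succ_of_le hi)
    exact ⟨h.isOpen, h.nonempty, fun m hm => Nat.succ_injective hm ▸ h.subset⟩

theorem not_alphaWinsPlain_strategy (hf : SeparatelyContinuous f)
    (hcover : ∀ n, ⋃ k, 𝒰 n k = univ) (hε : 0 < ε) (hB : ¬ IsMeagre (badSet f 𝒰 ε 0 0))
    (hpc : ∀ c : ℕ → ℕ, ∀ y : ℕ → K, (∀ n, y n ∈ ⋂ i ≤ n, 𝒰 i (c i)) →
      BoundedIn {h : {g : X → ℝ // Continuous g} | ∃ n, (h : X → ℝ) = phi f (y n)})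
    {U : ℕ → Set X} {a : ℕ → X} (hA : ∀ n, AlphaLegal (strategy f 𝒰 ε) U a n) :
    ¬ AlphaWinsPlain U a := by
  rintro ⟨t, htU, hta⟩
  simp only [AlphaLegal, strategy_hist] at hA
  have hstep : ∀ n, IsStep f 𝒰 ε (playState f 𝒰 ε U a n).2 (n + 1) (U n) (a '' Iic n)
      (playState f 𝒰 ε U a (n + 1)) := fun n =>
    isStep_playState_succ hf hcover hε hB n fun i _ => hA (i + 1) i (Nat.lt_succ_self i)
  choose y z hyz hgap hclose using fun n => (hstep n).exists_gap
  set C : ℕ → ℕ := fun i => (playState f 𝒰 ε U a i).2 i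
  have hC : ∀ n, ∀ i ≤ n, (playState f 𝒰 ε U a n).2 i = C i := by
    intro n
    induction n with
    | zero => intro i hi; rw [Nat.le_zero.1 hi]
    | succ n ih =>
      intro i hi
      rcases hi.lt_or_eq with hi | rfl
      · rw [(hstep n).eq_of_lt i hi, ih i (Nat.lt_succ_iff.1 hi)]
      · rfl
  have hbounded : ∀ w : ℕ → K,
      (∀ n, ∀ i ≤ n + 1, w n ∈ 𝒰 i ((playState f 𝒰 ε U a (n + 1)).2 i)) →
      BoundedIn (range fun n => (⟨phi f (w n), hf.2 (w n)⟩ : {g : X → ℝ // Continuous g})) :=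
    fun w hw => (hpc C w fun n => mem_iInter₂.2 fun i hi =>
      hC (n + 1) i (by omega) ▸ hw n i (by omega)).mono (by rintro _ ⟨n, rfl⟩; exact ⟨n, rfl⟩)
  have hle := le_of_boundedIn_of_mem_closure (hbounded y fun n i hi => (hyz n i hi).1)
    (hbounded z fun n i hi => (hyz n i hi).2) hta (δ := ε / 2) (η := ε / 4)
    (fun n => (hgap n t ((hA (n + 2) (n + 1) (by omega)).2.2 (mem_iInter.1 htU (n + 1)))).le)
    (fun i => (eventually_ge_atTop i).mono fun n hn => (hclose n (a i) ⟨i, hn, rfl⟩).le)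
  linarith

theorem isMeagre_badSet_zero (hX : SigmaBetaDefavorable X) (hf : SeparatelyContinuous f)
    (hcover : ∀ n, ⋃ k, 𝒰 n k = univ) (hε : 0 < ε)
    (hpc : ∀ c : ℕ → ℕ, ∀ y : ℕ → K, (∀ n, y n ∈ ⋂ i ≤ n, 𝒰 i (c i)) →
      BoundedIn {h : {g : X → ℝ // Continuous g} | ∃ n, (h : X → ℝ) = phi f (y n)}) :
    IsMeagre (badSet f 𝒰 ε 0 0) := by
  by_contra hB
  exact hX ⟨strategy f 𝒰 ε, betaLegal_strategy hf hcover hε hB,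
    fun U a hA => not_alphaWinsPlain_strategy hf hcover hε hB hpc hA⟩

end Play

end SepJoint

open SepJoint in
/-- Remark 4.2: `X` σ-β-defavorable and `(𝒰ₙ)` a sequence of countable
covers of `K` which is countably pseudo-complete with respect to `φ`; the conclusion of
Theorem 3.1 holds. -/
theorem residual_epsilon_continuity_of_pseudoComplete_covers
    {X K : Type*} [TopologicalSpace X] [TopologicalSpace K]
    (hX : SigmaBetaDefavorable X)
    (f : X × K → ℝ) (hf : SeparatelyContinuous f)
    (𝒰 : ℕ → ℕ → Set K) (hcover : ∀ n, (⋃ k, 𝒰 n k) = Set.univ)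
    (hpc : ∀ c : ℕ → ℕ, ∀ y : ℕ → K, (∀ n, y n ∈ ⋂ i ≤ n, 𝒰 i (c i)) →
      BoundedIn {h : {g : X → ℝ // Continuous g} | ∃ n, (h : X → ℝ) = phi f (y n)}) :
    ∀ ε : ℝ, 0 < ε → ∃ R ∈ residual X, ∀ x ∈ R, ∀ y : K,
      ∃ (k : ℕ) (c : ℕ → ℕ), y ∈ (⋂ i ≤ k, 𝒰 i (c i)) ∧
        ∃ O ∈ 𝓝 ((x, y) : X × K), ∀ p ∈ O, p.2 ∈ (⋂ i ≤ k, 𝒰 i (c i)) →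
          |f (x, y) - f p| < ε := by
  intro ε hε
  refine ⟨(badSet f 𝒰 ε 0 0)ᶜ, isMeagre_badSet_zero hX hf hcover hε hpc, fun x hx y => ?_⟩
  by_contra! hbad
  exact hx ⟨y, fun i hi => absurd hi i.not_lt_zero, hbad⟩
end

section
/- Every pseudocompact space X is σ*_{C(X)}-α-favorable, i.e., Player α has a winning strategy in the game 𝒥*_{C(X)} on X. -/
open Set Topology Filter

section Aux
open SepJoint

private lemma hist_getLastD_aux {A : Type*} (V : ℕ → A) (n : ℕ) (d : A) :
    (hist V (n + 1)).getLastD d = V n := by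
  rw [hist, List.ofFn_succ']
  simp [List.concat_eq_append]

private lemma shrink_exists_aux {X : Type*} [TopologicalSpace X] [RegularSpace X] {V : Set X}
    (hV : IsOpen V) (hne : V.Nonempty) :
    ∃ U : Set X, IsOpen U ∧ U.Nonempty ∧ closure U ⊆ V := by
  obtain ⟨x, hx⟩ := hne
  obtain ⟨t, ht, htc, hts⟩ := exists_mem_nhds_isClosed_subset (hV.mem_nhds hx)
  refine ⟨interior t, isOpen_interior, ⟨x, mem_interior_iff_mem_nhds.2 ht⟩, ?_⟩
  exact (closure_minimal interior_subset htc).trans hts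

private lemma feebly_aux {X : Type*} [TopologicalSpace X] [T35Space X]
    (hb : BoundedIn (Set.univ : Set X)) (W : ℕ → Set X)
    (hWo : ∀ k, IsOpen (W k)) (hWne : ∀ k, (W k).Nonempty) :
    ∃ t : X, ∀ N ∈ 𝓝 t, {k | (N ∩ W k).Nonempty}.Infinite := by
  by_contra hcon
  push_neg at hcon
  choose N hN hfin using hcon
  choose x hx using hWne
  have hf : ∀ k : ℕ, ∃ f : X → ℝ, Continuous f ∧ f (x k) = (k : ℝ) ∧
      (∀ y, 0 ≤ f y) ∧ ∀ y, y ∉ W k → f y = 0 := by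
    intro k
    obtain ⟨f, cf, hf0, hf1⟩ := CompletelyRegularSpace.completely_regular (x k) (W k)ᶜ
      (hWo k).isClosed_compl (by simpa using hx k)
    refine ⟨fun y => (k : ℝ) * (1 - (f y : ℝ)), ?_, ?_, ?_, ?_⟩
    · exact continuous_const.mul (continuous_const.sub (continuous_subtype_val.comp cf))
    · show (k : ℝ) * (1 - ((f (x k) : ℝ))) = (k : ℝ)
      rw [hf0]; norm_num
    · intro y
      show (0:ℝ) ≤ (k : ℝ) * (1 - ((f y : ℝ)))
      have h1 : (f y : ℝ) ≤ 1 := (f y).2.2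
      have h2 : (0:ℝ) ≤ (k:ℝ) := k.cast_nonneg
      nlinarith
    · intro y hy
      show (k : ℝ) * (1 - ((f y : ℝ))) = 0
      have h : f y = 1 := hf1 hy
      rw [h]; norm_num
  choose f hfc hfx hfnn hf0 using hf
  have hsupp : ∀ y : X, ∀ k ∉ (hfin y).toFinset, f k y = 0 := by
    intro y k hk
    by_contra hne
    have hyW : y ∈ W k := by
      by_contra h; exact hne (hf0 k y h)
    exact hk ((hfin y).mem_toFinset.2 ⟨y, mem_of_mem_nhds (hN y), hyW⟩)
  have hsum : ∀ y : X, Summable (fun k => f k y) :=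
    fun y => summable_of_ne_finset_zero (hsupp y)
  set F : X → ℝ := fun y => ∑' k, f k y with hF
  have hFcont : Continuous F := by
    rw [continuous_iff_continuousAt]
    intro y
    have hcontsum : ContinuousAt (fun z => ∑ k ∈ (hfin y).toFinset, f k z) y :=
      (continuous_finset_sum _ fun k _ => hfc k).continuousAt
    refine hcontsum.congr ?_
    filter_upwards [hN y] with z hz
    refine (tsum_eq_sum ?_).symm
    intro k hk
    refine hf0 k z ?_
    intro hzW
    exact hk ((hfin y).mem_toFinset.2 ⟨z, hz, hzW⟩)
  obtain ⟨M, hM⟩ := hb F hFcont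
  obtain ⟨k, hk⟩ := exists_nat_gt M
  have h1 : (k : ℝ) ≤ F (x k) := by
    have := Summable.le_tsum (hsum (x k)) k (fun j _ => hfnn j (x k))
    rwa [hfx k] at this
  have h2 := hM (x k) (Set.mem_univ _)
  have h3 := le_abs_self (F (x k))
  linarith

end Aux

open SepJoint in
/-- Corollary 5.2: every pseudocompact space `X` is
σ*_{C(X)}-α-favorable. -/
theorem pseudocompact_sigmaStarAlphaFavorable
    {X : Type*} [TopologicalSpace X] (hX : Pseudocompact X) :
    SigmaStarAlphaFavorable X {g : X → ℝ | Continuous g} := by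
  obtain ⟨hT, hb⟩ := hX
  haveI := hT
  have hsh' : ∀ V : Set X, ∃ U : Set X,
      IsOpen V → V.Nonempty → IsOpen U ∧ U.Nonempty ∧ closure U ⊆ V := by
    intro V
    by_cases h : IsOpen V ∧ V.Nonempty
    · obtain ⟨U, h1, h2, h3⟩ := shrink_exists_aux h.1 h.2
      exact ⟨U, fun _ _ => ⟨h1, h2, h3⟩⟩
    · exact ⟨∅, fun h1 h2 => absurd ⟨h1, h2⟩ h⟩
  choose sh hsh using hsh'
  set τ : AlphaStrategyStar X := fun L => sh (L.getLastD ∅) with hτ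
  have key : ∀ (V : ℕ → Set X) (n : ℕ), alphaMoveStar τ V n = sh (V n) := by
    intro V n
    simp only [alphaMoveStar, hτ]
    rw [hist_getLastD_aux]
  refine ⟨τ, ?_, ?_⟩
  · intro V n h0 hprev
    have hVn : IsOpen (V n) ∧ (V n).Nonempty := by
      cases n with
      | zero => exact h0
      | succ m =>
        obtain ⟨h1, h2, _⟩ := hprev m (Nat.lt_succ_self m)
        exact ⟨h1, h2⟩
    obtain ⟨h1, h2, h3⟩ := hsh (V n) hVn.1 hVn.2
    rw [key]
    exact ⟨h1, h2, subset_closure.trans h3⟩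
  · intro V hrun
    obtain ⟨hV0o, hV0ne, hVs⟩ := hrun
    have hVn : ∀ n, IsOpen (V n) ∧ (V n).Nonempty := by
      intro n
      cases n with
      | zero => exact ⟨hV0o, hV0ne⟩
      | succ m => exact ⟨(hVs m).1, (hVs m).2.1⟩
    set U : ℕ → Set X := fun n => alphaMoveStar τ V n with hUdef
    have hU : ∀ n, IsOpen (U n) ∧ (U n).Nonempty ∧ closure (U n) ⊆ V n := by
      intro n
      have : U n = sh (V n) := key V n
      rw [this]
      exact hsh (V n) (hVn n).1 (hVn n).2
    have hstep : ∀ n, closure (U (n + 1)) ⊆ U n := by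
      intro n
      exact (hU (n + 1)).2.2.trans (hVs n).2.2
    have hanti : ∀ m n, m ≤ n → U n ⊆ U m := by
      intro m n h
      induction h with
      | refl => exact subset_rfl
      | step h ih => exact (subset_closure.trans (hstep _)).trans ih
    intro a ha g hg
    simp only [Set.mem_setOf_eq] at hg
    obtain ⟨M, hM⟩ := hb g hg
    have haIcc : ∀ n, g (a n) ∈ Set.Icc (-M) M := by
      intro n
      have := abs_le.1 (hM (a n) (Set.mem_univ _))
      exact ⟨this.1, this.2⟩
    obtain ⟨c, -, φ, hφ, htend⟩ :=
      tendsto_subseq_of_bounded (Metric.isBounded_Icc (-M) M) haIcc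
    have hpick : ∀ k : ℕ, ∃ j : ℕ, k ≤ j ∧ |g (a (φ j)) - c| < 1 / ((k : ℝ) + 1) := by
      intro k
      have hkpos : (0 : ℝ) < 1 / ((k : ℝ) + 1) := by positivity
      obtain ⟨J, hJ⟩ := Metric.tendsto_atTop.1 htend (1 / ((k : ℝ) + 1)) hkpos
      refine ⟨max k J, le_max_left _ _, ?_⟩
      have := hJ (max k J) (le_max_right _ _)
      rwa [Function.comp_apply, Real.dist_eq] at this
    choose j hjk hjlt using hpick
    have hnk : ∀ k, k ≤ φ (j k) := fun k => (hjk k).trans hφ.le_apply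
    set W : ℕ → Set X := fun k => U (φ (j k)) ∩ {x | |g x - c| < 1 / ((k : ℝ) + 1)} with hWdef
    have hWo : ∀ k, IsOpen (W k) := by
      intro k
      exact (hU _).1.inter (isOpen_lt (hg.sub continuous_const).abs continuous_const)
    have hWne : ∀ k, (W k).Nonempty := by
      intro k
      exact ⟨a (φ (j k)), ha (φ (j k)), hjlt k⟩
    obtain ⟨t, ht⟩ := feebly_aux hb W hWo hWne
    have htU : ∀ n, t ∈ U n := by
      intro n
      refine hstep n ?_
      rw [mem_closure_iff]
      intro O hO htO
      have hinf := ht O (hO.mem_nhds htO)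
      obtain ⟨k, hkS, hk⟩ := hinf.exists_gt n
      obtain ⟨q, hqO, hqW⟩ := hkS
      exact ⟨q, hqO, hanti (n + 1) (φ (j k)) (le_trans hk (hnk k)) hqW.1⟩
    have hgt : g t = c := by
      by_contra hne
      have hpos : 0 < |g t - c| := abs_pos.2 (sub_ne_zero.2 hne)
      set ε : ℝ := |g t - c| / 3 with hε
      have hεpos : 0 < ε := by positivity
      have hO : IsOpen {x : X | |g x - g t| < ε} :=
        isOpen_lt (hg.sub continuous_const).abs continuous_const
      have htO : t ∈ {x : X | |g x - g t| < ε} := by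
        simp only [Set.mem_setOf_eq, sub_self, abs_zero]
        exact hεpos
      have hinf := ht _ (hO.mem_nhds htO)
      obtain ⟨K, hK⟩ := exists_nat_gt (1 / ε)
      obtain ⟨k, hkS, hKk⟩ := hinf.exists_gt K
      obtain ⟨q, hq1, hq2, hq3⟩ := hkS
      have hk1pos : (0 : ℝ) < (k : ℝ) + 1 := by positivity
      have h1k : 1 / ((k : ℝ) + 1) < ε := by
        rw [div_lt_iff₀ hk1pos]
        have hKk' : (K : ℝ) < (k : ℝ) + 1 := by
          exact_mod_cast Nat.lt_succ_of_lt hKk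
        have := (div_lt_iff₀ hεpos).1 (hK.trans hKk')
        linarith
      have habs : |g t - c| ≤ |g t - g q| + |g q - c| := abs_sub_le _ _ _
      have hq1' : |g t - g q| < ε := by
        have h' : |g q - g t| < ε := hq1
        rwa [abs_sub_comm] at h'
      have hq3' : |g q - c| < 1 / ((k : ℝ) + 1) := hq3
      have : |g t - c| < 2 * ε := by linarith
      rw [hε] at this
      linarith
    have hc : c ∈ closure (Set.range fun n => g (a n)) := by
      refine mem_closure_of_tendsto htend (Filter.Eventually.of_forall fun m => ?_)
      exact ⟨φ m, rfl⟩
    exact ⟨t, Set.mem_iInter.2 htU, hgt ▸ hc⟩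
end
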